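/- arXiv:2105.03335 — 2 statements merged into one kernel-verified Lean document; each statement's English description precedes it below -/
import Mathlib

section
/- Let Q be a preorder and T(Q) the set of finite Q-labeled trees with the h-preorder ≤_h. For non-singleton finite Q-trees (T,t) and (V,v), one has (T,t) ≤_h (V,v) if and only if: either t(ε) ≤ v(ε) and T(i) ≤_h V for every immediate subtree T(i) of T, or t(ε) ≰ v(ε) and T ≤_h V(j) for some immediate subtree V(j) of V. -/
/-- A finite `Q`-labeled rooted tree: a finite nonempty prefix-closed set of finite
strings of naturals, together with a labeling. -/
structure QTree (Q : Type*) where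
  nodes : Finset (List ℕ)
  nonempty : nodes.Nonempty
  prefix_closed : ∀ σ ∈ nodes, ∀ τ : List ℕ, τ <+: σ → τ ∈ nodes
  label : List ℕ → Q

/-- The h-preorder on finite `Q`-labeled trees: `T ≤_h V` iff there is a monotone map
(w.r.t. the prefix/tree order) from `T` to `V` which is nondecreasing on labels. -/
def QTree.hle {Q : Type*} [Preorder Q] (T V : QTree Q) : Prop :=
  ∃ f : List ℕ → List ℕ,
    (∀ σ ∈ T.nodes, f σ ∈ V.nodes) ∧
    (∀ σ ∈ T.nodes, ∀ τ ∈ T.nodes, σ <+: τ → f σ <+: f τ) ∧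
    (∀ σ ∈ T.nodes, T.label σ ≤ V.label (f σ))

/-- `T'` is the immediate subtree of `T` rooted at the child `i` of the root. -/
def QTree.IsSubtree {Q : Type*} (T : QTree Q) (i : ℕ) (T' : QTree Q) : Prop :=
  [i] ∈ T.nodes ∧ (∀ σ : List ℕ, σ ∈ T'.nodes ↔ i :: σ ∈ T.nodes) ∧
    ∀ σ ∈ T'.nodes, T'.label σ = T.label (i :: σ)

/-!
A witness `f` of `T ≤_h V` either fixes the root, and then `t(ε) ≤ v(ε)` and `f` restricts to
witnesses `T(i) ≤_h V`, or sends it to a node `j :: ρ`, and then monotonicity puts the whole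
image inside `V(j)`; when `t(ε) ≰ v(ε)` only the second case is possible. Conversely, witnesses
`T(i) ≤_h V` glue together with `ε ↦ ε`, and a witness `T ≤_h V(j)` becomes one for `T ≤_h V`
after prefixing `j`.
-/

namespace QTree

variable {Q : Type*}

lemma root_mem (T : QTree Q) : ([] : List ℕ) ∈ T.nodes := by
  obtain ⟨σ, hσ⟩ := T.nonempty
  exact T.prefix_closed σ hσ [] List.nil_prefix

lemma singleton_mem_of_cons_mem (T : QTree Q) {i : ℕ} {σ : List ℕ} (h : i :: σ ∈ T.nodes) :
    [i] ∈ T.nodes :=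
  T.prefix_closed _ h [i] (List.cons_prefix_cons.2 ⟨rfl, List.nil_prefix⟩)

noncomputable def child (T : QTree Q) (i : ℕ) (hi : [i] ∈ T.nodes) : QTree Q where
  nodes := T.nodes.preimage (List.cons i) List.cons_injective.injOn
  nonempty := ⟨[], Finset.mem_preimage.2 hi⟩
  prefix_closed σ hσ τ hτ :=
    Finset.mem_preimage.2 <| T.prefix_closed (i :: σ) (Finset.mem_preimage.1 hσ) (i :: τ)
      (List.cons_prefix_cons.2 ⟨rfl, hτ⟩)
  label σ := T.label (i :: σ)

lemma mem_child {T : QTree Q} {i : ℕ} {hi : [i] ∈ T.nodes} {σ : List ℕ} :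
    σ ∈ (T.child i hi).nodes ↔ i :: σ ∈ T.nodes :=
  Finset.mem_preimage (hf := List.cons_injective.injOn)

lemma isSubtree_child (T : QTree Q) (i : ℕ) (hi : [i] ∈ T.nodes) :
    T.IsSubtree i (T.child i hi) :=
  ⟨hi, fun _ => mem_child, fun _ _ => rfl⟩

variable [Preorder Q]

structure IsHom (T V : QTree Q) (f : List ℕ → List ℕ) : Prop where
  mem : ∀ σ ∈ T.nodes, f σ ∈ V.nodes
  mono : ∀ σ ∈ T.nodes, ∀ τ ∈ T.nodes, σ <+: τ → f σ <+: f τ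
  label_le : ∀ σ ∈ T.nodes, T.label σ ≤ V.label (f σ)

lemma hle_iff_exists_isHom {T V : QTree Q} : T.hle V ↔ ∃ f, T.IsHom V f :=
  ⟨fun ⟨f, hmem, hmono, hlabel⟩ => ⟨f, hmem, hmono, hlabel⟩,
    fun ⟨f, hmem, hmono, hlabel⟩ => ⟨f, hmem, hmono, hlabel⟩⟩

variable {T T' V V' : QTree Q} {f : List ℕ → List ℕ}

lemma IsHom.comp_cons {i : ℕ} (hf : T.IsHom V f) (hT' : T.IsSubtree i T') :
    T'.IsHom V (fun σ => f (i :: σ)) := by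
  obtain ⟨-, hmemT', hlabelT'⟩ := hT'
  refine ⟨fun σ hσ => hf.mem _ ((hmemT' σ).1 hσ), fun σ hσ τ hτ hστ => ?_, fun σ hσ => ?_⟩
  · exact hf.mono _ ((hmemT' σ).1 hσ) _ ((hmemT' τ).1 hτ) (List.cons_prefix_cons.2 ⟨rfl, hστ⟩)
  · exact hlabelT' σ hσ ▸ hf.label_le _ ((hmemT' σ).1 hσ)

lemma IsHom.cons_comp {j : ℕ} (hf : T.IsHom V' f) (hV' : V.IsSubtree j V') :
    T.IsHom V (fun σ => j :: f σ) := by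
  obtain ⟨-, hmemV', hlabelV'⟩ := hV'
  refine ⟨fun σ hσ => (hmemV' _).1 (hf.mem σ hσ), fun σ hσ τ hτ hστ => ?_, fun σ hσ => ?_⟩
  · exact List.cons_prefix_cons.2 ⟨rfl, hf.mono σ hσ τ hτ hστ⟩
  · exact hlabelV' _ (hf.mem σ hσ) ▸ hf.label_le σ hσ

lemma IsHom.eq_cons_tail {j : ℕ} {ρ : List ℕ} (hf : T.IsHom V f) (hroot : f [] = j :: ρ)
    {σ : List ℕ} (hσ : σ ∈ T.nodes) : f σ = j :: (f σ).tail := by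
  have hprefix : j :: ρ <+: f σ := hroot ▸ hf.mono [] T.root_mem σ hσ List.nil_prefix
  obtain ⟨τ, hτ⟩ := hprefix
  rw [← hτ]
  rfl

lemma IsHom.tail_comp {j : ℕ} (hf : T.IsHom V f) (hj : [j] ∈ V.nodes)
    (hcons : ∀ σ ∈ T.nodes, f σ = j :: (f σ).tail) :
    T.IsHom (V.child j hj) (fun σ => (f σ).tail) := by
  refine ⟨fun σ hσ => ?_, fun σ hσ τ hτ hστ => ?_, fun σ hσ => ?_⟩
  · exact mem_child.2 (hcons σ hσ ▸ hf.mem σ hσ)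
  · have h := hf.mono σ hσ τ hτ hστ
    rw [hcons σ hσ, hcons τ hτ] at h
    exact (List.cons_prefix_cons.1 h).2
  · have h := hf.label_le σ hσ
    rwa [hcons σ hσ] at h

lemma IsSubtree.hle_of_hle {i : ℕ} (hT' : T.IsSubtree i T') (h : T.hle V) : T'.hle V := by
  obtain ⟨f, hf⟩ := hle_iff_exists_isHom.1 h
  exact hle_iff_exists_isHom.2 ⟨_, hf.comp_cons hT'⟩

lemma IsSubtree.hle_of_hle_subtree {j : ℕ} (hV' : V.IsSubtree j V') (h : T.hle V') :
    T.hle V := by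
  obtain ⟨f, hf⟩ := hle_iff_exists_isHom.1 h
  exact hle_iff_exists_isHom.2 ⟨_, hf.cons_comp hV'⟩

lemma hle_of_label_root_le (hroot : T.label [] ≤ V.label [])
    (hsub : ∀ (i : ℕ) (T' : QTree Q), T.IsSubtree i T' → T'.hle V) : T.hle V := by
  have hchild : ∀ i, ∃ F : List ℕ → List ℕ, ∀ hi : [i] ∈ T.nodes, (T.child i hi).IsHom V F := by
    intro i
    by_cases hi : [i] ∈ T.nodes
    · obtain ⟨F, hF⟩ := hle_iff_exists_isHom.1 (hsub i _ (T.isSubtree_child i hi))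
      exact ⟨F, fun _ => hF⟩
    · exact ⟨id, fun hi' => absurd hi' hi⟩
  choose F hF using hchild
  let f : List ℕ → List ℕ
    | [] => []
    | i :: σ => F i σ
  refine hle_iff_exists_isHom.2 ⟨f, ⟨?_, ?_, ?_⟩⟩
  · rintro (_ | ⟨i, σ⟩) hσ
    · exact V.root_mem
    · exact (hF i (T.singleton_mem_of_cons_mem hσ)).mem σ (mem_child.2 hσ)
  · rintro (_ | ⟨i, σ⟩) hσ (_ | ⟨k, τ⟩) hτ hστ
    · exact List.nil_prefix
    · exact List.nil_prefix
    · exact absurd (List.prefix_nil.1 hστ) (List.cons_ne_nil _ _)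
    · obtain ⟨rfl, hστ'⟩ := List.cons_prefix_cons.1 hστ
      exact (hF i (T.singleton_mem_of_cons_mem hσ)).mono σ (mem_child.2 hσ)
        τ (mem_child.2 hτ) hστ'
  · rintro (_ | ⟨i, σ⟩) hσ
    · exact hroot
    · exact (hF i (T.singleton_mem_of_cons_mem hσ)).label_le σ (mem_child.2 hσ)

lemma exists_isSubtree_hle_of_hle (h : T.hle V) (hroot : ¬ T.label [] ≤ V.label []) :
    ∃ (j : ℕ) (V' : QTree Q), V.IsSubtree j V' ∧ T.hle V' := by
  obtain ⟨f, hf⟩ := hle_iff_exists_isHom.1 h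
  obtain ⟨j, ρ, hfroot⟩ : ∃ j ρ, f [] = j :: ρ := by
    refine List.exists_cons_of_ne_nil fun hnil => hroot ?_
    simpa only [hnil] using hf.label_le [] T.root_mem
  have hj : [j] ∈ V.nodes := V.singleton_mem_of_cons_mem (hfroot ▸ hf.mem [] T.root_mem)
  exact ⟨j, V.child j hj, V.isSubtree_child j hj,
    hle_iff_exists_isHom.2 ⟨_, hf.tail_comp hj fun σ hσ => hf.eq_cons_tail hfroot hσ⟩⟩

end QTree

theorem qtree_hle_iff_general {Q : Type*} [Preorder Q] (T V : QTree Q) :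
    T.hle V ↔
      ((T.label [] ≤ V.label [] ∧ ∀ (i : ℕ) (T' : QTree Q), T.IsSubtree i T' → T'.hle V) ∨
        (¬ T.label [] ≤ V.label [] ∧
          ∃ (j : ℕ) (V' : QTree Q), V.IsSubtree j V' ∧ T.hle V')) := by
  constructor
  · intro h
    by_cases hroot : T.label [] ≤ V.label []
    · exact Or.inl ⟨hroot, fun i T' hT' => hT'.hle_of_hle h⟩
    · exact Or.inr ⟨hroot, QTree.exists_isSubtree_hle_of_hle h hroot⟩
  · rintro (⟨hroot, hsub⟩ | ⟨-, j, V', hV', h⟩)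
    · exact QTree.hle_of_label_root_le hroot hsub
    · exact hV'.hle_of_hle_subtree h

/-- inductive characterization of the h-preorder on non-singleton trees:
`T ≤_h V` iff either `t(ε) ≤ v(ε)` and every immediate subtree `T(i)` of `T` satisfies
`T(i) ≤_h V`, or `t(ε) ≰ v(ε)` and `T ≤_h V(j)` for some immediate subtree `V(j)`. -/
theorem qtree_hle_iff {Q : Type*} [Preorder Q] (T V : QTree Q)
    (hT : ∃ σ ∈ T.nodes, σ ≠ ([] : List ℕ))
    (hV : ∃ σ ∈ V.nodes, σ ≠ ([] : List ℕ)) :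
    T.hle V ↔
      ((T.label [] ≤ V.label [] ∧ ∀ (i : ℕ) (T' : QTree Q), T.IsSubtree i T' → T'.hle V) ∨
        (¬ T.label [] ≤ V.label [] ∧
          ∃ (j : ℕ) (V' : QTree Q), V.IsSubtree j V' ∧ T.hle V')) :=
  qtree_hle_iff_general T V
end

section
/- A finite Q-forest F with at least two trees is minimal if and only if all of its component trees are minimal and pairwise incomparable under the h-preorder ≤_h. -/
/-- A finite `Q`-labeled forest: a finite set of nonempty finite strings of naturals,
closed under nonempty prefixes, together with a labeling. -/
structure QForest (Q : Type*) where
  nodes : Finset (List ℕ)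
  not_root : ([] : List ℕ) ∉ nodes
  prefix_closed : ∀ σ ∈ nodes, ∀ τ : List ℕ, τ <+: σ → τ ≠ [] → τ ∈ nodes
  label : List ℕ → Q

/-- The h-preorder on finite `Q`-labeled forests: `F ≤_h G` iff there is a monotone map
(w.r.t. the prefix order) from `F` to `G` which is nondecreasing on labels. -/
def QForest.hle {Q : Type*} [Preorder Q] (F G : QForest Q) : Prop :=
  ∃ f : List ℕ → List ℕ,
    (∀ σ ∈ F.nodes, f σ ∈ G.nodes) ∧
    (∀ σ ∈ F.nodes, ∀ τ ∈ F.nodes, σ <+: τ → f σ <+: f τ) ∧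
    (∀ σ ∈ F.nodes, F.label σ ≤ G.label (f σ))

/-- A `Q`-forest is minimal if it is not h-equivalent to a `Q`-forest of strictly
smaller cardinality. -/
def QForest.Minimal {Q : Type*} [Preorder Q] (F : QForest Q) : Prop :=
  ∀ G : QForest Q, F.hle G → G.hle F → F.nodes.card ≤ G.nodes.card

/-- `C` is the component tree of the forest `F` at root `i`: the subforest of all nodes
of `F` whose first entry is `i` (with the inherited labels). -/
def QForest.IsComponent {Q : Type*} (F : QForest Q) (i : ℕ) (C : QForest Q) : Prop :=
  [i] ∈ F.nodes ∧
    (∀ σ : List ℕ, σ ∈ C.nodes ↔ (σ ∈ F.nodes ∧ ∃ σ' : List ℕ, σ = i :: σ')) ∧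
    ∀ σ ∈ C.nodes, C.label σ = F.label σ


/-!
Suppose `F ≡_h G` via `f : F → G` and `g : G → F`. Since the components `F_i` are pairwise
incomparable, `g ∘ f` maps every `F_i` into itself; hence the nodes `f [i]` are pairwise
prefix-incomparable, the subtrees `G_i` of `G` above them are disjoint, and `F_i ≡_h G_i`.
Minimality of the `F_i` gives `|F| = Σ |F_i| ≤ Σ |G_i| ≤ |G|`.

Conversely, if `F_i ≤_h F_j` for `i ≠ j` then `F` is h-equivalent to the smaller forest obtained
by deleting `F_i`; and if `F_i` is h-equivalent to a smaller forest `D`, replacing `F_i` by a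
copy of `D` with fresh roots gives a smaller forest h-equivalent to `F`.
-/

namespace List

variable {α : Type*}

theorem IsPrefix.headI_eq [Inhabited α] {l₁ l₂ : List α} (h : l₁ <+: l₂) (hl : l₁ ≠ []) :
    l₁.headI = l₂.headI := by
  obtain ⟨t, rfl⟩ := h
  cases l₁ with
  | nil => exact absurd rfl hl
  | cons a l => rfl

theorem singleton_headI_prefix [Inhabited α] {l : List α} (hl : l ≠ []) : [l.headI] <+: l := by
  cases l with
  | nil => exact absurd rfl hl
  | cons a t => exact ⟨t, rfl⟩

theorem modifyHead_prefix_modifyHead_iff {f : α → α} (hf : Function.Injective f)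
    {l₁ l₂ : List α} : l₁.modifyHead f <+: l₂.modifyHead f ↔ l₁ <+: l₂ := by
  cases l₁ <;> cases l₂ <;> simp [modifyHead, cons_prefix_cons, hf.eq_iff]

theorem modifyHead_injective {f : α → α} (hf : Function.Injective f) :
    Function.Injective (modifyHead f) := fun _ _ h =>
  (modifyHead_prefix_modifyHead_iff hf).1 (h ▸ prefix_refl _) |>.eq_of_length
    (by simpa using congrArg length h)

theorem headI_modifyHead [Inhabited α] (f : α → α) {l : List α} (hl : l ≠ []) :
    (l.modifyHead f).headI = f l.headI := by
  cases l with
  | nil => exact absurd rfl hl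
  | cons a t => rfl

theorem modifyHead_sub_modifyHead_add (n : ℕ) (l : List ℕ) :
    (l.modifyHead (· + n)).modifyHead (· - n) = l := by
  cases l <;> simp [modifyHead]

end List

theorem Finset.sum_card_filter_prefix_le {ι α : Type*} [DecidableEq α] (s : Finset ι)
    (t : Finset (List α)) (b : ι → List α) (h : ∀ i ∈ s, ∀ j ∈ s, i ≠ j → ¬ b i <+: b j) :
    ∑ i ∈ s, (t.filter (b i <+: ·)).card ≤ t.card := by
  rw [← Finset.card_biUnion]
  · exact Finset.card_le_card (Finset.biUnion_subset.2 fun _ _ => Finset.filter_subset _ _)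
  · intro i hi j hj hij
    refine Finset.disjoint_left.2 fun τ hτi hτj => ?_
    rcases List.prefix_or_prefix_of_prefix (Finset.mem_filter.1 hτi).2
      (Finset.mem_filter.1 hτj).2 with h' | h'
    · exact h i hi j hj hij h'
    · exact h j hj i hi (Ne.symm hij) h'

namespace QForest

variable {Q : Type*}

theorem ne_nil_of_mem {F : QForest Q} {σ : List ℕ} (h : σ ∈ F.nodes) : σ ≠ [] :=
  fun h' => F.not_root (h' ▸ h)

theorem singleton_headI_mem {F : QForest Q} {σ : List ℕ} (h : σ ∈ F.nodes) :
    [σ.headI] ∈ F.nodes :=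
  F.prefix_closed σ h _ (List.singleton_headI_prefix (ne_nil_of_mem h)) (List.cons_ne_nil _ _)

section HMap

variable [Preorder Q] {F G H : QForest Q}

structure IsHMap (F G : QForest Q) (f : List ℕ → List ℕ) : Prop where
  mapsTo : ∀ σ ∈ F.nodes, f σ ∈ G.nodes
  prefix_mono : ∀ σ ∈ F.nodes, ∀ τ ∈ F.nodes, σ <+: τ → f σ <+: f τ
  label_le : ∀ σ ∈ F.nodes, F.label σ ≤ G.label (f σ)

theorem hle_iff_exists_isHMap : F.hle G ↔ ∃ f, F.IsHMap G f :=
  ⟨fun ⟨f, h₁, h₂, h₃⟩ => ⟨f, h₁, h₂, h₃⟩, fun ⟨f, h⟩ => ⟨f, h.1, h.2, h.3⟩⟩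

theorem IsHMap.hle {f : List ℕ → List ℕ} (hf : F.IsHMap G f) : F.hle G :=
  hle_iff_exists_isHMap.2 ⟨f, hf⟩

theorem IsHMap.comp {f g : List ℕ → List ℕ} (hg : G.IsHMap H g) (hf : F.IsHMap G f) :
    F.IsHMap H (g ∘ f) where
  mapsTo σ hσ := hg.mapsTo _ (hf.mapsTo σ hσ)
  prefix_mono σ hσ τ hτ hστ :=
    hg.prefix_mono _ (hf.mapsTo σ hσ) _ (hf.mapsTo τ hτ) (hf.prefix_mono σ hσ τ hτ hστ)
  label_le σ hσ := (hf.label_le σ hσ).trans (hg.label_le _ (hf.mapsTo σ hσ))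

theorem isHMap_id_of_subset (hsub : F.nodes ⊆ G.nodes)
    (hlabel : ∀ σ ∈ F.nodes, F.label σ ≤ G.label σ) : F.IsHMap G id where
  mapsTo _ hσ := hsub hσ
  prefix_mono _ _ _ _ := id
  label_le := hlabel

theorem hle_of_subset (hsub : F.nodes ⊆ G.nodes)
    (hlabel : ∀ σ ∈ F.nodes, F.label σ ≤ G.label σ) : F.hle G :=
  (isHMap_id_of_subset hsub hlabel).hle

theorem hle_refl (F : QForest Q) : F.hle F :=
  hle_of_subset subset_rfl fun _ _ => le_rfl

theorem hle_trans (h₁ : F.hle G) (h₂ : G.hle H) : F.hle H := by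
  obtain ⟨f, hf⟩ := hle_iff_exists_isHMap.1 h₁
  obtain ⟨g, hg⟩ := hle_iff_exists_isHMap.1 h₂
  exact (hg.comp hf).hle

theorem Minimal.of_hle_of_card_eq (hG : G.Minimal) (hFG : F.hle G) (hGF : G.hle F)
    (hcard : F.nodes.card = G.nodes.card) : F.Minimal := fun H hFH hHF =>
  hcard ▸ hG H (hle_trans hGF hFH) (hle_trans hHF hFG)

end HMap

section Restrict

open Classical in
noncomputable def restrict (F : QForest Q) (s : Set ℕ) : QForest Q where
  nodes := F.nodes.filter (·.headI ∈ s)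
  not_root h := F.not_root (Finset.mem_filter.1 h).1
  prefix_closed σ hσ τ hτσ hτ := by
    rw [Finset.mem_filter] at hσ ⊢
    exact ⟨F.prefix_closed σ hσ.1 τ hτσ hτ, hτσ.headI_eq hτ ▸ hσ.2⟩
  label := F.label

variable {F C : QForest Q} {s t : Set ℕ} {σ : List ℕ} {i : ℕ}

@[simp]
theorem mem_restrict : σ ∈ (F.restrict s).nodes ↔ σ ∈ F.nodes ∧ σ.headI ∈ s := by
  classical
  exact Finset.mem_filter

theorem singleton_prefix_of_mem_restrict_singleton (hσ : σ ∈ (F.restrict {i}).nodes) :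
    [i] <+: σ := by
  obtain ⟨hσF, rfl⟩ := mem_restrict.1 hσ
  exact List.singleton_headI_prefix (ne_nil_of_mem hσF)

theorem isComponent_restrict_singleton (hi : [i] ∈ F.nodes) : F.IsComponent i (F.restrict {i}) :=
  ⟨hi, fun σ => by
    rw [mem_restrict, Set.mem_singleton_iff]
    exact and_congr_right fun hσ => by
      obtain ⟨a, t, rfl⟩ := List.exists_cons_of_ne_nil (ne_nil_of_mem hσ)
      simp, fun _ _ => rfl⟩

theorem IsComponent.nodes_eq (hC : F.IsComponent i C) : C.nodes = (F.restrict {i}).nodes :=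
  Finset.ext fun σ => by rw [hC.2.1, ← (isComponent_restrict_singleton hC.1).2.1]

theorem card_restrict_add_card_restrict_compl (F : QForest Q) (s : Set ℕ) :
    (F.restrict s).nodes.card + (F.restrict sᶜ).nodes.card = F.nodes.card := by
  classical
  convert Finset.card_filter_add_card_filter_not (s := F.nodes) (·.headI ∈ s) using 3 <;>
    ext <;> simp

theorem card_restrict_compl_singleton_lt (hi : [i] ∈ F.nodes) :
    (F.restrict {i}ᶜ).nodes.card < F.nodes.card := by
  have : 0 < (F.restrict {i}).nodes.card := Finset.card_pos.2 ⟨[i], mem_restrict.2 ⟨hi, rfl⟩⟩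
  have := F.card_restrict_add_card_restrict_compl {i}
  omega

theorem card_eq_sum_card_restrict_singleton (F : QForest Q) :
    F.nodes.card = ∑ i ∈ F.nodes.image List.headI, (F.restrict {i}).nodes.card := by
  classical
  rw [Finset.card_eq_sum_card_image List.headI F.nodes]
  exact Finset.sum_congr rfl fun i _ => congrArg Finset.card (by ext; simp)

variable [Preorder Q]

theorem isHMap_restrict (F : QForest Q) (s : Set ℕ) : (F.restrict s).IsHMap F id :=
  isHMap_id_of_subset (fun _ hσ => (mem_restrict.1 hσ).1) fun _ _ => le_rfl

theorem restrict_hle (F : QForest Q) (s : Set ℕ) : (F.restrict s).hle F :=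
  (F.isHMap_restrict s).hle

theorem restrict_hle_restrict (hst : s ⊆ t) : (F.restrict s).hle (F.restrict t) :=
  hle_of_subset (fun _ hσ => mem_restrict.2 ⟨(mem_restrict.1 hσ).1, hst (mem_restrict.1 hσ).2⟩)
    fun _ _ => le_rfl

theorem IsComponent.hle_restrict (hC : F.IsComponent i C) : C.hle (F.restrict {i}) :=
  hle_of_subset hC.nodes_eq.subset fun σ hσ => (hC.2.2 σ hσ).le

theorem IsComponent.restrict_hle (hC : F.IsComponent i C) : (F.restrict {i}).hle C :=
  hle_of_subset hC.nodes_eq.symm.subset fun σ hσ => (hC.2.2 σ (hC.nodes_eq ▸ hσ)).ge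

end Restrict

section Union

def union (F G : QForest Q) : QForest Q where
  nodes := F.nodes ∪ G.nodes
  not_root h := (Finset.mem_union.1 h).elim F.not_root G.not_root
  prefix_closed σ hσ τ hτσ hτ := by
    rw [Finset.mem_union] at hσ ⊢
    exact hσ.imp (F.prefix_closed σ · τ hτσ hτ) (G.prefix_closed σ · τ hτσ hτ)
  label σ := if σ ∈ F.nodes then F.label σ else G.label σ

variable [Preorder Q] {F G H : QForest Q}

theorem hle_union_left : F.hle (F.union G) :=
  hle_of_subset Finset.subset_union_left fun _ hσ => (if_pos hσ).ge

theorem hle_union_right (hdisj : Disjoint F.nodes G.nodes) : G.hle (F.union G) :=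
  hle_of_subset Finset.subset_union_right fun _ hσ =>
    (if_neg (Finset.disjoint_right.1 hdisj hσ)).ge

theorem union_hle (hdisj : ∀ σ ∈ F.nodes, ∀ τ ∈ G.nodes, σ.headI ≠ τ.headI)
    (hF : F.hle H) (hG : G.hle H) : (F.union G).hle H := by
  obtain ⟨f, hf⟩ := hle_iff_exists_isHMap.1 hF
  obtain ⟨g, hg⟩ := hle_iff_exists_isHMap.1 hG
  have mem_right : ∀ σ ∈ (F.union G).nodes, σ ∉ F.nodes → σ ∈ G.nodes := fun σ hσ hσF =>
    (Finset.mem_union.1 hσ).resolve_left hσF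
  -- nodes related by `<+:` have the same root, hence lie in the same summand
  have mem_left_iff : ∀ σ ∈ (F.union G).nodes, ∀ τ ∈ (F.union G).nodes, σ <+: τ →
      (σ ∈ F.nodes ↔ τ ∈ F.nodes) := by
    intro σ hσ τ hτ hστ
    have hhead := hστ.headI_eq (ne_nil_of_mem (F := F.union G) hσ)
    constructor
    · exact fun hσF => by_contra fun hτF => hdisj σ hσF τ (mem_right τ hτ hτF) hhead
    · exact fun hτF => by_contra fun hσF => hdisj τ hτF σ (mem_right σ hσ hσF) hhead.symm
  refine ⟨fun σ => if σ ∈ F.nodes then f σ else g σ, fun σ hσ => ?_, fun σ hσ τ hτ hστ => ?_,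
    fun σ hσ => ?_⟩
  · dsimp only
    split_ifs with hσF
    · exact hf.mapsTo σ hσF
    · exact hg.mapsTo σ (mem_right σ hσ hσF)
  · by_cases hσF : σ ∈ F.nodes
    · have hτF := (mem_left_iff σ hσ τ hτ hστ).1 hσF
      simpa only [if_pos hσF, if_pos hτF] using hf.prefix_mono σ hσF τ hτF hστ
    · have hτF := mt (mem_left_iff σ hσ τ hτ hστ).2 hσF
      simpa only [if_neg hσF, if_neg hτF] using
        hg.prefix_mono σ (mem_right σ hσ hσF) τ (mem_right τ hτ hτF) hστ
  · change (if σ ∈ F.nodes then F.label σ else G.label σ) ≤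
      H.label (if σ ∈ F.nodes then _ else _)
    split_ifs with hσF
    · exact hf.label_le σ hσF
    · exact hg.label_le σ (mem_right σ hσ hσF)

theorem hle_of_restrict_hle_of_restrict_compl_hle (s : Set ℕ) (h₁ : (F.restrict s).hle H)
    (h₂ : (F.restrict sᶜ).hle H) : F.hle H := by
  refine hle_trans (hle_of_subset (G := (F.restrict s).union (F.restrict sᶜ)) ?_ ?_)
    (union_hle ?_ h₁ h₂)
  · intro σ hσ
    by_cases hs : σ.headI ∈ s
    · exact Finset.mem_union_left _ (mem_restrict.2 ⟨hσ, hs⟩)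
    · exact Finset.mem_union_right _ (mem_restrict.2 ⟨hσ, hs⟩)
  · intro σ _
    change F.label σ ≤ if _ then F.label σ else F.label σ
    rw [ite_self]
  · intro σ hσ τ hτ hστ
    exact (mem_restrict.1 hτ).2 (hστ ▸ (mem_restrict.1 hσ).2)

theorem Minimal.not_restrict_singleton_hle {i j : ℕ} (hF : F.Minimal) (hij : i ≠ j)
    (hi : [i] ∈ F.nodes) : ¬ (F.restrict {i}).hle (F.restrict {j}) := fun h =>
  have hle : F.hle (F.restrict {i}ᶜ) :=
    hle_of_restrict_hle_of_restrict_compl_hle {i}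
      (hle_trans h (restrict_hle_restrict (Set.singleton_subset_iff.2 hij.symm)))
      (hle_refl _)
  (card_restrict_compl_singleton_lt hi).not_ge (hF _ hle (F.restrict_hle _))

end Union

section Shift

def shift (F : QForest Q) (n : ℕ) : QForest Q where
  nodes := F.nodes.image (List.modifyHead (· + n))
  not_root h := by
    obtain ⟨σ, hσ, hσn⟩ := Finset.mem_image.1 h
    exact F.not_root (List.modifyHead_eq_nil_iff.1 hσn ▸ hσ)
  prefix_closed σ hσ τ hτσ hτ := by
    obtain ⟨ρ, hρ, rfl⟩ := Finset.mem_image.1 hσ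
    obtain ⟨a, t, rfl⟩ := List.exists_cons_of_ne_nil (ne_nil_of_mem hρ)
    obtain ⟨b, u, rfl⟩ := List.exists_cons_of_ne_nil hτ
    obtain ⟨rfl, hut⟩ := List.cons_prefix_cons.1 hτσ
    refine Finset.mem_image.2 ⟨a :: u, F.prefix_closed _ hρ _ ?_ (List.cons_ne_nil _ _), rfl⟩
    exact List.cons_prefix_cons.2 ⟨rfl, hut⟩
  label σ := F.label (σ.modifyHead (· - n))

variable {F : QForest Q} {n : ℕ}

theorem le_headI_of_mem_shift {σ : List ℕ} (hσ : σ ∈ (F.shift n).nodes) : n ≤ σ.headI := by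
  obtain ⟨ρ, hρ, rfl⟩ := Finset.mem_image.1 hσ
  rw [List.headI_modifyHead _ (ne_nil_of_mem hρ)]
  exact Nat.le_add_left n _

theorem card_shift (F : QForest Q) (n : ℕ) : (F.shift n).nodes.card = F.nodes.card :=
  Finset.card_image_of_injective _ (List.modifyHead_injective (add_left_injective n))

variable [Preorder Q]

theorem hle_shift (F : QForest Q) (n : ℕ) : F.hle (F.shift n) :=
  IsHMap.hle (f := List.modifyHead (· + n))
    { mapsTo := fun _ hσ => Finset.mem_image_of_mem _ hσ
      prefix_mono := fun _ _ _ _ hστ =>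
        (List.modifyHead_prefix_modifyHead_iff (add_left_injective n)).2 hστ
      label_le := fun σ _ => (congrArg F.label (List.modifyHead_sub_modifyHead_add n σ)).ge }

theorem shift_hle (F : QForest Q) (n : ℕ) : (F.shift n).hle F :=
  IsHMap.hle (f := List.modifyHead (· - n))
    { mapsTo := fun σ hσ => by
        obtain ⟨ρ, hρ, rfl⟩ := Finset.mem_image.1 hσ
        rwa [List.modifyHead_sub_modifyHead_add]
      prefix_mono := fun σ hσ τ hτ hστ => by
        obtain ⟨ρ, -, rfl⟩ := Finset.mem_image.1 hσ
        obtain ⟨ρ', -, rfl⟩ := Finset.mem_image.1 hτ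
        rwa [List.modifyHead_sub_modifyHead_add, List.modifyHead_sub_modifyHead_add,
          ← List.modifyHead_prefix_modifyHead_iff (add_left_injective n)]
      label_le := fun _ _ => le_rfl }

end Shift

section Reroot

/-- The subtree of `G` above `b`, as a tree with root `[0]`. -/
def reroot (G : QForest Q) (b : List ℕ) (hb : b ≠ []) : QForest Q where
  nodes := (G.nodes.filter (b <+: ·)).image fun τ => 0 :: τ.drop b.length
  not_root h := by
    obtain ⟨τ, -, hτ⟩ := Finset.mem_image.1 h
    exact List.cons_ne_nil _ _ hτ
  prefix_closed σ hσ τ hτσ hτ := by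
    obtain ⟨ρ, hρ, rfl⟩ := Finset.mem_image.1 hσ
    obtain ⟨hρG, hbρ⟩ := Finset.mem_filter.1 hρ
    obtain ⟨a, u, rfl⟩ := List.exists_cons_of_ne_nil hτ
    obtain ⟨rfl, hu⟩ := List.cons_prefix_cons.1 hτσ
    have hbu : b ++ u <+: ρ := by
      rw [← List.prefix_iff_eq_append.1 hbρ]
      exact (List.prefix_append_right_inj b).2 hu
    refine Finset.mem_image.2 ⟨b ++ u, Finset.mem_filter.2 ⟨?_, List.prefix_append _ _⟩, ?_⟩
    · exact G.prefix_closed ρ hρG _ hbu (by simp [hb])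
    · rw [List.drop_left]
  label σ := G.label (b ++ σ.tail)

variable {G : QForest Q} {b : List ℕ} {hb : b ≠ []} {σ : List ℕ}

theorem mem_reroot : σ ∈ (G.reroot b hb).nodes ↔ ∃ l, σ = 0 :: l ∧ b ++ l ∈ G.nodes := by
  constructor
  · intro h
    obtain ⟨ρ, hρ, rfl⟩ := Finset.mem_image.1 h
    obtain ⟨hρG, hbρ⟩ := Finset.mem_filter.1 hρ
    exact ⟨_, rfl, (List.prefix_iff_eq_append.1 hbρ).symm ▸ hρG⟩
  · rintro ⟨l, rfl, hl⟩
    refine Finset.mem_image.2 ⟨b ++ l, Finset.mem_filter.2 ⟨hl, List.prefix_append _ _⟩, ?_⟩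
    rw [List.drop_left]

theorem card_reroot : (G.reroot b hb).nodes.card = (G.nodes.filter (b <+: ·)).card := by
  refine Finset.card_image_of_injOn fun τ hτ τ' hτ' h => ?_
  rw [← List.prefix_iff_eq_append.1 (Finset.mem_filter.1 hτ).2,
    ← List.prefix_iff_eq_append.1 (Finset.mem_filter.1 hτ').2]
  exact congrArg (b ++ ·) (List.cons.inj h).2

theorem singleton_zero_prefix_of_mem_reroot (hσ : σ ∈ (G.reroot b hb).nodes) : [0] <+: σ := by
  obtain ⟨l, rfl, -⟩ := mem_reroot.1 hσ
  exact List.cons_prefix_cons.2 ⟨rfl, List.nil_prefix⟩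

variable [Preorder Q]

theorem isHMap_reroot_append : (G.reroot b hb).IsHMap G fun σ => b ++ σ.tail where
  mapsTo σ hσ := by
    obtain ⟨l, rfl, hl⟩ := mem_reroot.1 hσ
    exact hl
  prefix_mono σ hσ τ hτ hστ := by
    obtain ⟨l, rfl, -⟩ := mem_reroot.1 hσ
    obtain ⟨l', rfl, -⟩ := mem_reroot.1 hτ
    exact (List.prefix_append_right_inj b).2 (List.cons_prefix_cons.1 hστ).2
  label_le _ _ := le_rfl

theorem IsHMap.reroot {C : QForest Q} {f : List ℕ → List ℕ} (hf : C.IsHMap G f)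
    (hbf : ∀ σ ∈ C.nodes, b <+: f σ) :
    C.IsHMap (G.reroot b hb) fun σ => 0 :: (f σ).drop b.length where
  mapsTo σ hσ := mem_reroot.2 ⟨_, rfl, (List.prefix_iff_eq_append.1 (hbf σ hσ)).symm ▸
    hf.mapsTo σ hσ⟩
  prefix_mono σ hσ τ hτ hστ := by
    refine List.cons_prefix_cons.2 ⟨rfl, ?_⟩
    rw [← List.prefix_append_right_inj b, List.prefix_iff_eq_append.1 (hbf σ hσ),
      List.prefix_iff_eq_append.1 (hbf τ hτ)]
    exact hf.prefix_mono σ hσ τ hτ hστ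
  label_le σ hσ := by
    change C.label σ ≤ G.label (b ++ (f σ).drop b.length)
    rw [List.prefix_iff_eq_append.1 (hbf σ hσ)]
    exact hf.label_le σ hσ

end Reroot

variable [Preorder Q] {F : QForest Q}

theorem IsHMap.hle_restrict_headI {C H : QForest Q} {φ : List ℕ → List ℕ} (hφ : C.IsHMap H φ)
    {ρ : List ℕ} (hρ : ρ ∈ C.nodes) (hρσ : ∀ σ ∈ C.nodes, ρ <+: σ) :
    C.hle (H.restrict {(φ ρ).headI}) :=
  IsHMap.hle (f := φ)
    { mapsTo := fun σ hσ => mem_restrict.2 ⟨hφ.mapsTo σ hσ,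
        ((hφ.prefix_mono ρ hρ σ hσ (hρσ σ hσ)).headI_eq (ne_nil_of_mem (hφ.mapsTo ρ hρ))).symm⟩
      prefix_mono := hφ.prefix_mono
      label_le := hφ.label_le }

theorem Minimal.restrict (hF : F.Minimal) (s : Set ℕ) : (F.restrict s).Minimal := by
  intro D hCD hDC
  by_contra! hlt
  -- `D` is planted next to `F.restrict sᶜ` on roots beyond all roots of `F`
  set N := F.nodes.sup List.headI + 1
  set G := (F.restrict sᶜ).union (D.shift N)
  have hdisj : ∀ σ ∈ (F.restrict sᶜ).nodes, ∀ τ ∈ (D.shift N).nodes, σ.headI ≠ τ.headI :=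
    fun σ hσ τ hτ => (Nat.lt_succ_of_le (Finset.le_sup (mem_restrict.1 hσ).1)).trans_le
      (le_headI_of_mem_shift hτ) |>.ne
  have hFG : F.hle G := hle_of_restrict_hle_of_restrict_compl_hle s
    (hle_trans hCD (hle_trans (D.hle_shift N) (hle_union_right
      (Finset.disjoint_left.2 fun σ hσ hσ' => hdisj σ hσ σ hσ' rfl))))
    hle_union_left
  have hGF : G.hle F := union_hle hdisj (F.restrict_hle _)
    (hle_trans (D.shift_hle N) (hle_trans hDC (F.restrict_hle s)))
  have hGcard : G.nodes.card ≤ (F.restrict sᶜ).nodes.card + D.nodes.card :=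
    (Finset.card_union_le _ _).trans_eq (by rw [card_shift])
  have := F.card_restrict_add_card_restrict_compl s
  have := hF G hFG hGF
  omega

theorem card_restrict_singleton_le_of_isHMap {G : QForest Q} {f g : List ℕ → List ℕ} {i : ℕ}
    (hmin : (F.restrict {i}).Minimal) (hf : F.IsHMap G f) (hg : G.IsHMap F g)
    (hi : [i] ∈ F.nodes) (hgf : (g (f [i])).headI = i) :
    (F.restrict {i}).nodes.card ≤ (G.nodes.filter (f [i] <+: ·)).card := by
  have hb : f [i] ≠ [] := ne_nil_of_mem (hf.mapsTo _ hi)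
  have hCR : (F.restrict {i}).hle (G.reroot (f [i]) hb) :=
    ((hf.comp (F.isHMap_restrict {i})).reroot fun σ hσ => hf.prefix_mono _ hi σ
      (mem_restrict.1 hσ).1 (singleton_prefix_of_mem_restrict_singleton hσ)).hle
  have hRC : (G.reroot (f [i]) hb).hle (F.restrict {i}) := by
    have hroot : [0] ∈ (G.reroot (f [i]) hb).nodes :=
      mem_reroot.2 ⟨[], rfl, (List.append_nil _).symm ▸ hf.mapsTo _ hi⟩
    simpa [hgf] using (hg.comp isHMap_reroot_append).hle_restrict_headI hroot
      fun _ => singleton_zero_prefix_of_mem_reroot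
  exact card_reroot ▸ hmin _ hCR hRC

theorem minimal_of_restrict_singleton
    (hmin : ∀ i, [i] ∈ F.nodes → (F.restrict {i}).Minimal)
    (hinc : ∀ i j, i ≠ j → [i] ∈ F.nodes → [j] ∈ F.nodes →
      ¬ (F.restrict {i}).hle (F.restrict {j})) :
    F.Minimal := by
  intro G hFG hGF
  obtain ⟨f, hf⟩ := hle_iff_exists_isHMap.1 hFG
  obtain ⟨g, hg⟩ := hle_iff_exists_isHMap.1 hGF
  have hroot : ∀ i ∈ F.nodes.image List.headI, [i] ∈ F.nodes := by
    simp only [Finset.mem_image]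
    rintro _ ⟨σ, hσ, rfl⟩
    exact singleton_headI_mem hσ
  have hgf : ∀ i ∈ F.nodes.image List.headI, (g (f [i])).headI = i := by
    intro i hi
    by_contra hne
    have hgfi := hg.mapsTo _ (hf.mapsTo _ (hroot i hi))
    exact hinc i _ (Ne.symm hne) (hroot i hi) (singleton_headI_mem hgfi)
      (((hg.comp hf).comp (F.isHMap_restrict {i})).hle_restrict_headI
        (mem_restrict.2 ⟨hroot i hi, rfl⟩) fun _ => singleton_prefix_of_mem_restrict_singleton)
  have hf_incomp : ∀ i ∈ F.nodes.image List.headI, ∀ j ∈ F.nodes.image List.headI, i ≠ j →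
      ¬ f [i] <+: f [j] := fun i hi j hj hij hfij =>
    hij <| (hgf i hi).symm.trans <| (hgf j hj) ▸
      (hg.prefix_mono _ (hf.mapsTo _ (hroot i hi)) _ (hf.mapsTo _ (hroot j hj)) hfij).headI_eq
        (ne_nil_of_mem (hg.mapsTo _ (hf.mapsTo _ (hroot i hi))))
  calc F.nodes.card = ∑ i ∈ F.nodes.image List.headI, (F.restrict {i}).nodes.card :=
        F.card_eq_sum_card_restrict_singleton
    _ ≤ ∑ i ∈ F.nodes.image List.headI, (G.nodes.filter (f [i] <+: ·)).card :=
        Finset.sum_le_sum fun i hi => card_restrict_singleton_le_of_isHMap (hmin i (hroot i hi))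
          hf hg (hroot i hi) (hgf i hi)
    _ ≤ G.nodes.card := Finset.sum_card_filter_prefix_le _ _ _ hf_incomp

end QForest

theorem minimal_iff_components_general {Q : Type*} [PartialOrder Q] (F : QForest Q) :
    F.Minimal ↔
      ((∀ (i : ℕ) (C : QForest Q), F.IsComponent i C → C.Minimal) ∧
        ∀ (i j : ℕ) (Ci Cj : QForest Q), i ≠ j → F.IsComponent i Ci →
          F.IsComponent j Cj → ¬ Ci.hle Cj ∧ ¬ Cj.hle Ci) := by
  open QForest in
  constructor
  · intro hF
    refine ⟨fun i C hC => (hF.restrict {i}).of_hle_of_card_eq hC.hle_restrict hC.restrict_hle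
      (by rw [hC.nodes_eq]), fun i j Ci Cj hij hCi hCj => ⟨fun h => ?_, fun h => ?_⟩⟩
    · exact hF.not_restrict_singleton_hle hij hCi.1
        (hle_trans hCi.restrict_hle (hle_trans h hCj.hle_restrict))
    · exact hF.not_restrict_singleton_hle hij.symm hCj.1
        (hle_trans hCj.restrict_hle (hle_trans h hCi.hle_restrict))
  · rintro ⟨hmin, hinc⟩
    exact minimal_of_restrict_singleton
      (fun i hi => hmin i _ (isComponent_restrict_singleton hi))
      fun i j hij hi hj => (hinc i j _ _ hij (isComponent_restrict_singleton hi)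
        (isComponent_restrict_singleton hj)).1

/-- a finite `Q`-forest with at least two trees is minimal iff all of its
component trees are minimal and pairwise incomparable under the h-preorder. -/
theorem minimal_iff_components {Q : Type*} [PartialOrder Q] (F : QForest Q)
    (htwo : ∃ i j : ℕ, i ≠ j ∧ [i] ∈ F.nodes ∧ [j] ∈ F.nodes) :
    F.Minimal ↔
      ((∀ (i : ℕ) (C : QForest Q), F.IsComponent i C → C.Minimal) ∧
        ∀ (i j : ℕ) (Ci Cj : QForest Q), i ≠ j → F.IsComponent i Ci →
          F.IsComponent j Cj → ¬ Ci.hle Cj ∧ ¬ Cj.hle Ci) :=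
  minimal_iff_components_general F
end
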